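/- arXiv:2303.10676 — 4 statements merged into one kernel-verified Lean document; each statement's English description precedes it below -/
import Mathlib

section
/- Let X₁, X₂ be real normed spaces, V₁ ⊆ X₁ and V₂ ⊆ X₂ nonempty closed convex sets, and let X = X₁ ⊕_∞ X₂ with the maximum norm and V = V₁ × V₂. For any nonempty closed bounded subset B of X, let B(1) and B(2) denote the coordinate projections of B onto X₁ and X₂. Then rad_V(B) = max{rad_{V₁}(B(1)), rad_{V₂}(B(2))}, where rad_V(B) = inf_{v∈V} sup_{b∈B} ‖v−b‖. -/
/-!
Mathlib's norm on `X₁ × X₂` is already the maximum norm, so for bounded `B` the farthest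
distance splits: `r((v₁, v₂), B) = max (r(v₁, B(1))) (r(v₂, B(2)))` (boundedness matters, since
`⨆` of an unbounded family of reals is `0`). The two coordinates of `v ∈ V₁ × V₂` vary
independently, and the infimum of `max (f i) (g j)` over pairs is the max of the two infima.
-/

open Metric Set Bornology Pointwise

/-- The farthest distance `r(v,B) = sup_{b ∈ B} ‖v - b‖`. -/
noncomputable def farr {X : Type*} [NormedAddCommGroup X] (v : X) (B : Set X) : ℝ :=
  ⨆ b : B, ‖v - (b : X)‖

/-- The restricted Chebyshev radius `rad_V(B) = inf_{v ∈ V} r(v,B)`. -/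
noncomputable def rad {X : Type*} [NormedAddCommGroup X] (V B : Set X) : ℝ :=
  ⨅ v : V, farr (v : X) B

theorem ciInf_sup_ciInf {α ι κ : Type*} [ConditionallyCompleteLinearOrder α]
    [Nonempty ι] [Nonempty κ] {f : ι → α} {g : κ → α}
    (hf : BddBelow (range f)) (hg : BddBelow (range g)) :
    (⨅ i, f i) ⊔ (⨅ j, g j) = ⨅ p : ι × κ, f p.1 ⊔ g p.2 := by
  refine le_antisymm (le_ciInf fun p => sup_le_sup (ciInf_le hf _) (ciInf_le hg _)) ?_
  have hbdd : BddBelow (range fun p : ι × κ => f p.1 ⊔ g p.2) := by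
    obtain ⟨a, ha⟩ := hf
    exact ⟨a, forall_mem_range.2 fun p => le_sup_of_le_left (ha (mem_range_self _))⟩
  refine le_of_forall_gt fun c hc => ?_
  obtain ⟨i, hi⟩ := exists_lt_of_ciInf_lt (le_sup_left.trans_lt hc)
  obtain ⟨j, hj⟩ := exists_lt_of_ciInf_lt (le_sup_right.trans_lt hc)
  exact (ciInf_le hbdd (i, j)).trans_lt (sup_lt_iff.2 ⟨hi, hj⟩)

section Farr

variable {X Y : Type*} [NormedAddCommGroup X]

theorem farr_nonneg (v : X) (B : Set X) : 0 ≤ farr v B :=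
  Real.iSup_nonneg fun _ => norm_nonneg _

theorem bddBelow_range_farr (V B : Set X) : BddBelow (range fun v : V => farr (v : X) B) :=
  ⟨0, forall_mem_range.2 fun _ => farr_nonneg _ _⟩

theorem farr_image (f : Y → X) (v : X) (B : Set Y) :
    farr v (f '' B) = ⨆ b : B, ‖v - f b‖ :=
  (imageFactorization_surjective.iSup_congr _ fun _ => rfl).symm

theorem Bornology.IsBounded.bddAbove_range_norm_sub {B : Set X} (hB : IsBounded B) (v : X) :
    BddAbove (range fun b : B => ‖v - b‖) := by
  obtain ⟨r, hr⟩ := (isBounded_iff_subset_closedBall v).1 hB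
  exact ⟨r, forall_mem_range.2 fun b => by simpa [← dist_eq_norm, dist_comm] using hr b.2⟩

theorem farr_prod [NormedAddCommGroup Y] {B : Set (X × Y)} (hB : IsBounded B) (v₁ : X) (v₂ : Y) :
    farr (v₁, v₂) B = farr v₁ (Prod.fst '' B) ⊔ farr v₂ (Prod.snd '' B) := by
  have hbdd := hB.bddAbove_range_norm_sub (v₁, v₂)
  rw [farr_image, farr_image]
  exact ciSup_sup_eq (bbdAbove_range_left_of_sup hbdd) (bbdAbove_range_right_of_sup hbdd)

end Farr

theorem stmt0_general {X₁ X₂ : Type*} [NormedAddCommGroup X₁]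
    [NormedAddCommGroup X₂]
    (V₁ : Set X₁) (V₂ : Set X₂)
    (hV₁ne : V₁.Nonempty)
    (hV₂ne : V₂.Nonempty)
    (B : Set (X₁ × X₂)) (hBb : IsBounded B) :
    rad (V₁ ×ˢ V₂) B = max (rad V₁ (Prod.fst '' B)) (rad V₂ (Prod.snd '' B)) := by
  have := hV₁ne.to_subtype
  have := hV₂ne.to_subtype
  calc rad (V₁ ×ˢ V₂) B
      = ⨅ v : V₁ × V₂, farr (v.1 : X₁) (Prod.fst '' B) ⊔ farr (v.2 : X₂) (Prod.snd '' B) :=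
        (Equiv.Set.prod V₁ V₂).iInf_congr fun v => (farr_prod hBb _ _).symm
    _ = _ := (ciInf_sup_ciInf (bddBelow_range_farr _ _) (bddBelow_range_farr _ _)).symm

theorem stmt0 {X₁ X₂ : Type*} [NormedAddCommGroup X₁] [NormedSpace ℝ X₁]
    [NormedAddCommGroup X₂] [NormedSpace ℝ X₂]
    (V₁ : Set X₁) (V₂ : Set X₂)
    (hV₁ne : V₁.Nonempty) (hV₁c : IsClosed V₁) (hV₁conv : Convex ℝ V₁)
    (hV₂ne : V₂.Nonempty) (hV₂c : IsClosed V₂) (hV₂conv : Convex ℝ V₂)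
    (B : Set (X₁ × X₂)) (hBne : B.Nonempty) (hBc : IsClosed B) (hBb : IsBounded B) :
    rad (V₁ ×ˢ V₂) B = max (rad V₁ (Prod.fst '' B)) (rad V₂ (Prod.snd '' B)) :=
  stmt0_general V₁ V₂ hV₁ne hV₂ne B hBb
end

section
/- Let X₁, X₂ be Banach spaces, V₁ ⊆ X₁ and V₂ ⊆ X₂ nonempty closed convex sets, X = X₁ ⊕_∞ X₂, V = V₁ × V₂. If for each i ∈ {1,2} and every nonempty closed bounded B_i ⊆ X_i the set cent_{V_i}(B_i) = {v ∈ V_i : r(v,B_i) = rad_{V_i}(B_i)} is nonempty, then for every nonempty closed bounded B ⊆ X the set cent_V(B) is nonempty. -/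
open Metric Set Bornology Pointwise

/-- The set of restricted Chebyshev centers of `B` in `V`. -/
noncomputable def cheb {X : Type*} [NormedAddCommGroup X] (V B : Set X) : Set X :=
  {v ∈ V | farr v B = rad V B}

/-!
Since the norm of `X₁ × X₂` is the max norm, the farthest distance from `(v₁, v₂)` to `B` is the
larger of the farthest distances from `v₁` to `π₁ B` and from `v₂` to `π₂ B`. Both terms are
minimised independently over `V₁ × V₂` by Chebyshev centers of the projections, so the pair of
these centers minimises their maximum. The hypotheses only speak of closed sets, but passing to the
closure of a bounded set changes no farthest distance, hence no Chebyshev center.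
-/

section Farthest

variable {X : Type*} [NormedAddCommGroup X] {v : X} {S T V : Set X}

lemma farr_nonneg_s3 : 0 ≤ farr v S :=
  Real.iSup_nonneg fun _ => norm_nonneg _

lemma Bornology.IsBounded.bddAbove_norm_sub (hS : IsBounded S) :
    BddAbove (range fun b : S => ‖v - (b : X)‖) := by
  obtain ⟨C, hC⟩ := isBounded_iff_forall_norm_le.1 hS
  refine ⟨‖v‖ + C, ?_⟩
  rintro _ ⟨b, rfl⟩
  calc ‖v - (b : X)‖ ≤ ‖v‖ + ‖(b : X)‖ := norm_sub_le _ _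
    _ ≤ ‖v‖ + C := by gcongr; exact hC b b.2

lemma norm_sub_le_farr (hS : IsBounded S) {b : X} (hb : b ∈ S) : ‖v - b‖ ≤ farr v S :=
  le_ciSup hS.bddAbove_norm_sub (⟨b, hb⟩ : S)

lemma farr_le {r : ℝ} (hr : 0 ≤ r) (h : ∀ b ∈ S, ‖v - b‖ ≤ r) : farr v S ≤ r :=
  Real.iSup_le (fun b => h b b.2) hr

lemma farr_mono (hST : S ⊆ T) (hT : IsBounded T) : farr v S ≤ farr v T :=
  farr_le farr_nonneg_s3 fun _ hb => norm_sub_le_farr hT (hST hb)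

lemma farr_closure (hS : IsBounded S) : farr v (closure S) = farr v S := by
  refine le_antisymm (farr_le farr_nonneg_s3 fun b hb => ?_) (farr_mono subset_closure hS.closure)
  have hclosed : IsClosed {x | ‖v - x‖ ≤ farr v S} := isClosed_le (by fun_prop) continuous_const
  exact closure_minimal (fun _ => norm_sub_le_farr hS) hclosed hb

lemma rad_closure (hS : IsBounded S) : rad V (closure S) = rad V S := by
  simp only [rad, farr_closure hS]

lemma cheb_closure (hS : IsBounded S) : cheb V (closure S) = cheb V S := by
  simp only [cheb, farr_closure hS, rad_closure hS]

lemma rad_le_farr {w : X} (hw : w ∈ V) : rad V S ≤ farr w S :=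
  ciInf_le ⟨0, by rintro _ ⟨_, rfl⟩; exact farr_nonneg_s3⟩ (⟨w, hw⟩ : V)

lemma farr_le_farr_of_mem_cheb {c w : X} (hc : c ∈ cheb V S) (hw : w ∈ V) :
    farr c S ≤ farr w S :=
  hc.2.trans_le (rad_le_farr hw)

lemma mem_cheb_of_forall_farr_le {c : X} (hc : c ∈ V) (h : ∀ w ∈ V, farr c S ≤ farr w S) :
    c ∈ cheb V S := by
  have : Nonempty V := ⟨⟨c, hc⟩⟩
  exact ⟨hc, le_antisymm (le_ciInf fun w => h w w.2) (rad_le_farr hc)⟩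

end Farthest

section Product

variable {X₁ X₂ : Type*} [NormedAddCommGroup X₁] [NormedAddCommGroup X₂]

lemma farr_prod_s3 {B : Set (X₁ × X₂)} (hB : IsBounded B) (v : X₁ × X₂) :
    farr v B = max (farr v.1 (Prod.fst '' B)) (farr v.2 (Prod.snd '' B)) := by
  refine le_antisymm (farr_le (le_max_of_le_left farr_nonneg_s3) fun b hb => ?_) (max_le ?_ ?_)
  · rw [Prod.norm_def]
    exact max_le_max (norm_sub_le_farr hB.image_fst (mem_image_of_mem _ hb))
      (norm_sub_le_farr hB.image_snd (mem_image_of_mem _ hb))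
  · refine farr_le farr_nonneg_s3 ?_
    rintro _ ⟨b, hb, rfl⟩
    exact (norm_fst_le (v - b)).trans (norm_sub_le_farr hB hb)
  · refine farr_le farr_nonneg_s3 ?_
    rintro _ ⟨b, hb, rfl⟩
    exact (norm_snd_le (v - b)).trans (norm_sub_le_farr hB hb)

lemma mk_mem_cheb_prod {V₁ : Set X₁} {V₂ : Set X₂} {B : Set (X₁ × X₂)} (hB : IsBounded B)
    {c₁ : X₁} {c₂ : X₂} (hc₁ : c₁ ∈ cheb V₁ (Prod.fst '' B))
    (hc₂ : c₂ ∈ cheb V₂ (Prod.snd '' B)) : (c₁, c₂) ∈ cheb (V₁ ×ˢ V₂) B := by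
  refine mem_cheb_of_forall_farr_le ⟨hc₁.1, hc₂.1⟩ fun w hw => ?_
  rw [farr_prod_s3 hB, farr_prod_s3 hB]
  exact max_le_max (farr_le_farr_of_mem_cheb hc₁ hw.1) (farr_le_farr_of_mem_cheb hc₂ hw.2)

end Product

theorem stmt3_general {X₁ X₂ : Type*} [NormedAddCommGroup X₁] [NormedAddCommGroup X₂]
    (V₁ : Set X₁) (V₂ : Set X₂)
    (h₁ : ∀ B₁ : Set X₁, B₁.Nonempty → IsClosed B₁ → IsBounded B₁ → (cheb V₁ B₁).Nonempty)
    (h₂ : ∀ B₂ : Set X₂, B₂.Nonempty → IsClosed B₂ → IsBounded B₂ → (cheb V₂ B₂).Nonempty) :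
    ∀ B : Set (X₁ × X₂), B.Nonempty → IsClosed B → IsBounded B →
      (cheb (V₁ ×ˢ V₂) B).Nonempty := by
  intro B hBne _ hB
  obtain ⟨c₁, hc₁⟩ := h₁ _ (hBne.image _).closure isClosed_closure hB.image_fst.closure
  obtain ⟨c₂, hc₂⟩ := h₂ _ (hBne.image _).closure isClosed_closure hB.image_snd.closure
  rw [cheb_closure hB.image_fst] at hc₁
  rw [cheb_closure hB.image_snd] at hc₂
  exact ⟨(c₁, c₂), mk_mem_cheb_prod hB hc₁ hc₂⟩

theorem stmt3 {X₁ X₂ : Type*} [NormedAddCommGroup X₁] [NormedSpace ℝ X₁] [CompleteSpace X₁]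
    [NormedAddCommGroup X₂] [NormedSpace ℝ X₂] [CompleteSpace X₂]
    (V₁ : Set X₁) (V₂ : Set X₂)
    (hV₁ne : V₁.Nonempty) (hV₁c : IsClosed V₁) (hV₁conv : Convex ℝ V₁)
    (hV₂ne : V₂.Nonempty) (hV₂c : IsClosed V₂) (hV₂conv : Convex ℝ V₂)
    (h₁ : ∀ B₁ : Set X₁, B₁.Nonempty → IsClosed B₁ → IsBounded B₁ → (cheb V₁ B₁).Nonempty)
    (h₂ : ∀ B₂ : Set X₂, B₂.Nonempty → IsClosed B₂ → IsBounded B₂ → (cheb V₂ B₂).Nonempty) :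
    ∀ B : Set (X₁ × X₂), B.Nonempty → IsClosed B → IsBounded B →
      (cheb (V₁ ×ˢ V₂) B).Nonempty :=
  stmt3_general V₁ V₂ h₁ h₂
end

section
/- Let X be a Banach space, V ⊆ X a nonempty closed convex set, and 𝓕 a family of nonempty closed bounded subsets of X such that cent_V(F) ≠ ∅ for all F ∈ 𝓕. Let F ∈ 𝓕 and α > rad_V(F). Then for each ε > 0 there exists δ > 0 such that for every F′ ∈ 𝓕 with d_H(F,F′) < δ and every scalar β with |α − β| < δ, the Hausdorff distance between ⋂_{z∈F} B_X[z,α] ∩ V and ⋂_{z′∈F′} B_X[z′,β] ∩ V is less than ε. -/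
/-!
Write `K(γ) = (⋂ z ∈ F, closedBall z γ) ∩ V`. If `d_H(F, F') < δ` and `|α - β| < δ`, both sets
lie between `K(α - 2δ)` and `K(α + 2δ)`. A point of `K(α + 2δ)` reaches `K(α - 2δ)` by moving a
fraction `4δ / (α + 2δ - rad_V F)` of the way towards a restricted Chebyshev center `c ∈ V` of `F`,
since the distance to each `z ∈ F` is convex along the segment; as `dist x c ≤ α + 2δ + rad_V F`,
this costs `O(δ)`.
-/

open Metric Set Bornology Pointwise

open AffineMap Filter Topology

section PseudoMetric

variable {α : Type*} [PseudoMetricSpace α]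

theorem iInter_closedBall_subset_of_hausdorffDist_lt {s t : Set α} {γ γ' δ : ℝ}
    (hfin : hausdorffEDist s t ≠ ⊤) (hst : hausdorffDist s t < δ) (hγ : γ + δ ≤ γ') :
    ⋂ z ∈ s, closedBall z γ ⊆ ⋂ z ∈ t, closedBall z γ' := by
  simp only [subset_def, mem_iInter₂, mem_closedBall]
  intro x hx z' hz'
  obtain ⟨z, hz, hzz'⟩ := exists_dist_lt_of_hausdorffDist_lt' hz' hst hfin
  linarith [dist_triangle x z z', hx z hz]

theorem hausdorffDist_le_of_subset_of_subset {A B C D : Set α} {η : ℝ} (hη : 0 ≤ η)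
    (hCA : C ⊆ A) (hCB : C ⊆ B) (hAD : A ⊆ D) (hBD : B ⊆ D)
    (hD : ∀ x ∈ D, ∃ y ∈ C, dist x y ≤ η) : hausdorffDist A B ≤ η := by
  have hinf {S : Set α} (hCS : C ⊆ S) (x : α) (hx : x ∈ D) : infDist x S ≤ η := by
    obtain ⟨y, hy, hxy⟩ := hD x hx
    exact (infDist_le_dist_of_mem (hCS hy)).trans hxy
  exact hausdorffDist_le_of_infDist hη (fun x hx ↦ hinf hCB x (hAD hx))
    (fun x hx ↦ hinf hCA x (hBD hx))

end PseudoMetric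

section Normed

variable {E : Type*} [NormedAddCommGroup E] [NormedSpace ℝ E]

theorem lineMap_mem_iInter_closedBall {s : Set E} {x y : E} {a b t : ℝ}
    (hx : x ∈ ⋂ z ∈ s, closedBall z a) (hy : y ∈ ⋂ z ∈ s, closedBall z b) (ht : t ∈ Icc 0 1) :
    lineMap x y t ∈ ⋂ z ∈ s, closedBall z ((1 - t) * a + t * b) := by
  simp only [mem_iInter₂, mem_closedBall] at hx hy ⊢
  intro z hz
  have hconv := (convexOn_dist z convex_univ).2 (mem_univ x) (mem_univ y)
    (sub_nonneg.2 ht.2) ht.1 (sub_add_cancel 1 t)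
  rw [lineMap_apply_module]
  refine hconv.trans ?_
  simp only [smul_eq_mul]
  gcongr
  exacts [sub_nonneg.2 ht.2, hx z hz, ht.1, hy z hz]

theorem exists_mem_iInter_closedBall_inter_dist_le {V s : Set E} (hV : Convex ℝ V)
    (hs : s.Nonempty) {c : E} {r a b : ℝ} (hcV : c ∈ V) (hc : c ∈ ⋂ z ∈ s, closedBall z r)
    (hra : r < a) (hab : a ≤ b) :
    ∀ x ∈ (⋂ z ∈ s, closedBall z b) ∩ V,
      ∃ y ∈ (⋂ z ∈ s, closedBall z a) ∩ V, dist x y ≤ (b - a) / (b - r) * (b + r) := by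
  rintro x ⟨hx, hxV⟩
  have hbr : 0 < b - r := by linarith
  set t := (b - a) / (b - r)
  have ht : t ∈ Icc 0 1 :=
    ⟨div_nonneg (by linarith) hbr.le, (div_le_one hbr).2 (by linarith)⟩
  have hrad : (1 - t) * b + t * r = a := by
    simp only [t]; field_simp; ring
  obtain ⟨z₀, hz₀⟩ := hs
  have hxc : dist x c ≤ b + r := (dist_triangle x z₀ c).trans
    (add_le_add (mem_iInter₂.1 hx z₀ hz₀) (dist_comm c z₀ ▸ mem_iInter₂.1 hc z₀ hz₀))
  refine ⟨lineMap x c t, ⟨hrad ▸ lineMap_mem_iInter_closedBall hx hc ht,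
    hV.lineMap_mem hxV hcV ht⟩, ?_⟩
  rw [dist_comm, dist_lineMap_left, Real.norm_of_nonneg ht.1]
  exact mul_le_mul_of_nonneg_left hxc ht.1

end Normed

theorem mem_iInter_closedBall_farr {E : Type*} [NormedAddCommGroup E] {B : Set E}
    (hB : IsBounded B) (x : E) :
    x ∈ ⋂ z ∈ B, closedBall z (farr x B) := by
  obtain ⟨R, hR⟩ := hB.subset_closedBall x
  have hbdd : BddAbove (range fun b : B ↦ ‖x - (b : E)‖) :=
    ⟨R, forall_mem_range.2 fun b ↦ by rw [← dist_eq_norm, dist_comm]; exact hR b.2⟩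
  simp only [mem_iInter₂, mem_closedBall, dist_eq_norm]
  exact fun z hz ↦ le_ciSup hbdd ⟨z, hz⟩

/-- The quantity bounded by `ε` is the cost, in the lemma above, of shrinking from radius
`α + 2δ` down to `α - 2δ`. -/
theorem exists_pos_shrinking_cost_lt {r α ε : ℝ} (hα : r < α) (hε : 0 < ε) :
    ∃ δ > 0, r < α - 2 * δ ∧
      (α + 2 * δ - (α - 2 * δ)) / (α + 2 * δ - r) * (α + 2 * δ + r) < ε := by
  have hcost : ∀ᶠ δ in 𝓝 (0 : ℝ),
      (α + 2 * δ - (α - 2 * δ)) / (α + 2 * δ - r) * (α + 2 * δ + r) < ε := by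
    have hcont : ContinuousAt (fun δ : ℝ ↦
        (α + 2 * δ - (α - 2 * δ)) / (α + 2 * δ - r) * (α + 2 * δ + r)) 0 := by
      fun_prop (disch := simp; linarith)
    exact hcont.eventually (gt_mem_nhds (by simpa using hε))
  have hrad : ∀ᶠ δ in 𝓝 (0 : ℝ), r < α - 2 * δ :=
    (show Continuous (fun δ : ℝ ↦ α - 2 * δ) by fun_prop).continuousAt.eventually
      (lt_mem_nhds (by simpa using hα))
  obtain ⟨δ, ⟨hrδ, hδε⟩, hδ⟩ := ((hrad.and hcost).filter_mono nhdsWithin_le_nhds).and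
    (self_mem_nhdsWithin : ∀ᶠ δ in 𝓝[>] (0 : ℝ), 0 < δ) |>.exists
  exact ⟨δ, hδ, hrδ, hδε⟩

theorem stmt6_general {X : Type*} [NormedAddCommGroup X] [NormedSpace ℝ X]
    (V : Set X) (hVconv : Convex ℝ V)
    (𝓕 : Set (Set X))
    (h𝓕 : ∀ F ∈ 𝓕, F.Nonempty ∧ IsClosed F ∧ IsBounded F)
    (hrcp : ∀ F ∈ 𝓕, (cheb V F).Nonempty)
    (F : Set X) (hF : F ∈ 𝓕) (α : ℝ) (hα : rad V F < α) :
    ∀ ε > (0 : ℝ), ∃ δ > (0 : ℝ), ∀ F' ∈ 𝓕, hausdorffDist F F' < δ →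
      ∀ β : ℝ, |α - β| < δ →
        hausdorffDist ((⋂ z ∈ F, closedBall z α) ∩ V)
          ((⋂ z' ∈ F', closedBall z' β) ∩ V) < ε := by
  intro ε hε
  obtain ⟨hFne, -, hFbd⟩ := h𝓕 F hF
  obtain ⟨c, hcV, hc⟩ := hrcp F hF
  have hcr : c ∈ ⋂ z ∈ F, closedBall z (rad V F) := hc ▸ mem_iInter_closedBall_farr hFbd c
  have hr : 0 ≤ rad V F := dist_nonneg.trans (mem_iInter₂.1 hcr _ hFne.some_mem)
  obtain ⟨δ, hδ, hrδ, hδε⟩ := exists_pos_shrinking_cost_lt hα hε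
  refine ⟨δ, hδ, fun F' hF' hFF' β hβ ↦ ?_⟩
  obtain ⟨hF'ne, -, hF'bd⟩ := h𝓕 F' hF'
  have hfin := hausdorffEDist_ne_top_of_nonempty_of_bounded hFne hF'ne hFbd hF'bd
  obtain ⟨hβ₁, hβ₂⟩ := abs_lt.1 hβ
  have mono {γ γ' : ℝ} (h : γ ≤ γ') :
      (⋂ z ∈ F, closedBall z γ) ∩ V ⊆ (⋂ z ∈ F, closedBall z γ') ∩ V :=
    inter_subset_inter_left V (biInter_mono subset_rfl fun z _ ↦ closedBall_subset_closedBall h)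
  refine (hausdorffDist_le_of_subset_of_subset ?_ (mono ?_)
    (inter_subset_inter_left V (iInter_closedBall_subset_of_hausdorffDist_lt hfin hFF' ?_))
    (mono ?_) (inter_subset_inter_left V (iInter_closedBall_subset_of_hausdorffDist_lt
      (by rwa [hausdorffEDist_comm]) (by rwa [hausdorffDist_comm]) ?_))
    (exists_mem_iInter_closedBall_inter_dist_le hVconv hFne hcV hcr hrδ ?_)).trans_lt hδε
  · exact mul_nonneg (div_nonneg (by linarith) (by linarith)) (by linarith)
  all_goals linarith

theorem stmt6 {X : Type*} [NormedAddCommGroup X] [NormedSpace ℝ X] [CompleteSpace X]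
    (V : Set X) (hVne : V.Nonempty) (hVc : IsClosed V) (hVconv : Convex ℝ V)
    (𝓕 : Set (Set X))
    (h𝓕 : ∀ F ∈ 𝓕, F.Nonempty ∧ IsClosed F ∧ IsBounded F)
    (hrcp : ∀ F ∈ 𝓕, (cheb V F).Nonempty)
    (F : Set X) (hF : F ∈ 𝓕) (α : ℝ) (hα : rad V F < α) :
    ∀ ε > (0 : ℝ), ∃ δ > (0 : ℝ), ∀ F' ∈ 𝓕, hausdorffDist F F' < δ →
      ∀ β : ℝ, |α - β| < δ →
        hausdorffDist ((⋂ z ∈ F, closedBall z α) ∩ V)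
          ((⋂ z' ∈ F', closedBall z' β) ∩ V) < ε :=
  stmt6_general V hVconv 𝓕 h𝓕 hrcp F hF α hα
end

section
/- Let T be a topological space and X a uniformly convex Banach space. Then for every nonempty closed bounded subset B of C_b(T,X) (bounded continuous X-valued functions with sup norm), the set of restricted Chebyshev centers of B in the closed unit ball of C_b(T,X) is nonempty, and the triplet (C_b(T,X), B_{C_b(T,X)}, CB(C_b(T,X))) has property-(P₁). -/
/-!
Uniform convexity of `X`, with a modulus that is uniform over radii in a bounded range, lets one
move a near-center `f` of the unit ball of `C_b(T, X)` pointwise by at most `ε` towards an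
arbitrarily better near-center `g` without ending up worse than `g`; the new values lie on the
segments `[f t, g t]`, so they stay in the ball. As the admissible slack `δ` depends only on `ε`,
iterating with `ε / 2 ^ (k + 1)` gives a Cauchy sequence of ever better near-centers whose limit
is a center within `ε` of `f`. This yields both the existence of centers and property (P₁).
-/

open Metric Set Bornology Pointwise

/-- Property-(P₁) for the triplet `(X, V, CB(X))`: restricted Chebyshev centers exist for
every nonempty closed bounded set and near-centers are close to centers. -/
noncomputable def propP1 {X : Type*} [NormedAddCommGroup X] (V : Set X) : Prop :=
  ∀ B : Set X, B.Nonempty → IsClosed B → IsBounded B →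
    (cheb V B).Nonempty ∧ ∀ ε > (0 : ℝ), ∃ δ > (0 : ℝ),
      {v ∈ V | farr v B ≤ rad V B + δ} ⊆ cheb V B + closedBall 0 ε

open Filter

section Farthest

variable {E : Type*} [NormedAddCommGroup E] {B V : Set E}

theorem farr_bddAbove (hB : IsBounded B) (f : E) :
    BddAbove (range fun b : B => ‖f - (b : E)‖) := by
  obtain ⟨C, hC⟩ := isBounded_iff_forall_norm_le.mp hB
  refine ⟨‖f‖ + C, ?_⟩
  rintro x ⟨b, rfl⟩
  exact (norm_sub_le _ _).trans (by gcongr; exact hC b b.2)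

theorem norm_sub_le_farr_s10 (hB : IsBounded B) (f : E) {b : E} (hb : b ∈ B) :
    ‖f - b‖ ≤ farr f B :=
  le_ciSup (farr_bddAbove hB f) ⟨b, hb⟩

theorem farr_le_s10 (hB_ne : B.Nonempty) {f : E} {s : ℝ} (h : ∀ b ∈ B, ‖f - b‖ ≤ s) :
    farr f B ≤ s :=
  have := hB_ne.to_subtype
  ciSup_le fun b => h b b.2

theorem farr_nonneg_s10 (hB_ne : B.Nonempty) (hB : IsBounded B) (f : E) : 0 ≤ farr f B :=
  (norm_nonneg _).trans (norm_sub_le_farr_s10 hB f hB_ne.some_mem)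

theorem lipschitzWith_farr (hB_ne : B.Nonempty) (hB : IsBounded B) :
    LipschitzWith 1 fun f => farr f B :=
  LipschitzWith.of_le_add fun f g => farr_le_s10 hB_ne fun b hb =>
    calc ‖f - b‖ ≤ ‖g - b‖ + ‖f - g‖ := by
          simpa only [sub_add_sub_cancel'] using norm_add_le (g - b) (f - g)
      _ ≤ farr g B + dist f g := by
          rw [dist_eq_norm]; gcongr; exact norm_sub_le_farr_s10 hB g hb

theorem rad_le_farr_s10 (hB_ne : B.Nonempty) (hB : IsBounded B) {v : E} (hv : v ∈ V) :
    rad V B ≤ farr v B :=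
  ciInf_le ⟨0, by rintro _ ⟨w, rfl⟩; exact farr_nonneg_s10 hB_ne hB _⟩ (⟨v, hv⟩ : V)

theorem exists_farr_le_rad_add (hV_ne : V.Nonempty) {δ : ℝ} (hδ : 0 < δ) :
    ∃ v ∈ V, farr v B ≤ rad V B + δ := by
  have := hV_ne.to_subtype
  obtain ⟨v, hv⟩ := exists_lt_of_ciInf_lt (lt_add_of_pos_right (rad V B) hδ)
  exact ⟨v, v.2, hv.le⟩

end Farthest

theorem exists_seq_forall_mem_rel {α : Type*} {S : ℕ → Set α} {R : ℕ → α → α → Prop}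
    (h : ∀ k, ∀ x ∈ S k, ∃ y ∈ S (k + 1), R k x y) {x : α} (hx : x ∈ S 0) :
    ∃ u : ℕ → α, u 0 = x ∧ (∀ k, u k ∈ S k) ∧ ∀ k, R k (u k) (u (k + 1)) := by
  choose next hnext_mem hnext using h
  let v : ∀ k, S k := fun k =>
    Nat.rec (motive := fun k => S k) ⟨x, hx⟩ (fun k p => ⟨next k p p.2, hnext_mem k p p.2⟩) k
  exact ⟨fun k => v k, rfl, fun k => (v k).2, fun k => hnext k _ _⟩

theorem exists_le_of_forall_exists_le_add {α : Type*} [PseudoMetricSpace α] [CompleteSpace α]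
    {V : Set α} (hV : IsClosed V) {F : α → ℝ} (hF : LowerSemicontinuous F) {r : ℝ}
    (hstep : ∀ ε > 0, ∃ δ > 0, ∀ δ' > 0, ∀ x ∈ V, F x ≤ r + δ →
      ∃ y ∈ V, F y ≤ r + δ' ∧ dist x y ≤ ε) :
    ∀ ε > 0, ∃ δ > 0, ∀ x ∈ V, F x ≤ r + δ → ∃ y ∈ V, F y ≤ r ∧ dist x y ≤ ε := by
  intro ε hε
  choose D hD_pos hD using fun k : ℕ => hstep (ε / 2 * (1 / 2) ^ k) (by positivity)
  set δ : ℕ → ℝ := fun k => min (D k) ((1 / 2) ^ k)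
  have hδ_pos : ∀ k, 0 < δ k := fun k => lt_min (hD_pos k) (by positivity)
  have step : ∀ k, ∀ x ∈ {x ∈ V | F x ≤ r + δ k},
      ∃ y ∈ {y ∈ V | F y ≤ r + δ (k + 1)}, dist x y ≤ ε / 2 * (1 / 2) ^ k := by
    rintro k x ⟨hxV, hxF⟩
    obtain ⟨y, hyV, hyF, hxy⟩ :=
      hD k (δ (k + 1)) (hδ_pos _) x hxV (hxF.trans (by gcongr; exact min_le_left _ _))
    exact ⟨y, ⟨hyV, hyF⟩, hxy⟩
  refine ⟨δ 0, hδ_pos 0, fun x hxV hxF => ?_⟩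
  obtain ⟨u, rfl, hu, hdist⟩ := exists_seq_forall_mem_rel step ⟨hxV, hxF⟩
  obtain ⟨y, hy⟩ :=
    cauchySeq_tendsto_of_complete (cauchySeq_of_le_geometric _ _ (by norm_num) hdist)
  have hyV : y ∈ V := hV.mem_of_tendsto hy (Eventually.of_forall fun k => (hu k).1)
  have hyF : F y ≤ r := by
    refine le_of_forall_pos_le_add fun η hη => ?_
    obtain ⟨K, hK⟩ := exists_pow_lt_of_lt_one hη (by norm_num : (1 / 2 : ℝ) < 1)
    refine (hF.isClosed_preimage (r + η)).mem_of_tendsto hy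
      (eventually_atTop.2 ⟨K, fun k hk => ?_⟩)
    calc F (u k) ≤ r + (1 / 2) ^ k := (hu k).2.trans (by gcongr; exact min_le_right _ _)
      _ ≤ r + (1 / 2) ^ K := by
        gcongr r + ?_
        exact pow_le_pow_of_le_one (by norm_num : (0 : ℝ) ≤ 1 / 2) (by norm_num) hk
      _ ≤ r + η := by linarith
  refine ⟨y, hyV, hyF, ?_⟩
  calc dist (u 0) y ≤ ε / 2 / (1 - 1 / 2) :=
        dist_le_of_le_geometric_of_tendsto₀ _ _ (by norm_num) hdist hy
    _ = ε := by ring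

theorem propP1_of_forall_exists_dist_le {E : Type*} [NormedAddCommGroup E] [CompleteSpace E]
    {V : Set E} (hV : IsClosed V) (hV_ne : V.Nonempty)
    (hstep : ∀ B : Set E, B.Nonempty → IsBounded B → ∀ ε > 0, ∃ δ > 0, ∀ δ' > 0, ∀ v ∈ V,
      farr v B ≤ rad V B + δ → ∃ w ∈ V, farr w B ≤ rad V B + δ' ∧ dist v w ≤ ε) :
    propP1 V := by
  intro B hB_ne _ hB
  have approx := exists_le_of_forall_exists_le_add hV
    (lipschitzWith_farr hB_ne hB).continuous.lowerSemicontinuous (hstep B hB_ne hB)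
  have mem_cheb : ∀ w ∈ V, farr w B ≤ rad V B → w ∈ cheb V B := fun w hw h =>
    ⟨hw, h.antisymm (rad_le_farr_s10 hB_ne hB hw)⟩
  refine ⟨?_, fun ε hε => ?_⟩
  · obtain ⟨δ, hδ, h⟩ := approx 1 one_pos
    obtain ⟨v, hv, hvF⟩ := exists_farr_le_rad_add hV_ne hδ
    obtain ⟨w, hw, hwF, -⟩ := h v hv hvF
    exact ⟨w, mem_cheb w hw hwF⟩
  · obtain ⟨δ, hδ, h⟩ := approx ε hε
    refine ⟨δ, hδ, fun v ⟨hv, hvF⟩ => ?_⟩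
    obtain ⟨w, hw, hwF, hvw⟩ := h v hv hvF
    refine ⟨w, mem_cheb w hw hwF, v - w, ?_, add_sub_cancel w v⟩
    rwa [mem_closedBall_zero_iff, ← dist_eq_norm]

section StepToward

variable {E : Type*} [NormedAddCommGroup E] [NormedSpace ℝ E]

/-- The point of the segment `[x, y]` at distance `min ε ‖y - x‖` from `x`. -/
noncomputable def stepToward (ε : ℝ) (x y : E) : E :=
  x + (ε / max ε ‖y - x‖) • (y - x)

variable {ε : ℝ}

theorem stepToward_sub (x y c : E) :
    stepToward ε x y - c = stepToward ε (x - c) (y - c) := by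
  simp only [stepToward, sub_sub_sub_cancel_right]
  abel

theorem stepToward_mem_segment (hε : 0 < ε) (x y : E) : stepToward ε x y ∈ segment ℝ x y := by
  rw [segment_eq_image']
  have hmax : 0 < max ε ‖y - x‖ := lt_max_of_lt_left hε
  exact ⟨_, ⟨by positivity, div_le_one_of_le₀ (le_max_left _ _) hmax.le⟩, rfl⟩

theorem norm_stepToward_le_max (hε : 0 < ε) (x y : E) :
    ‖stepToward ε x y‖ ≤ max ‖x‖ ‖y‖ := by
  rw [← mem_closedBall_zero_iff]
  exact (convex_closedBall _ _).segment_subset (mem_closedBall_zero_iff.2 (le_max_left _ _))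
    (mem_closedBall_zero_iff.2 (le_max_right _ _)) (stepToward_mem_segment hε x y)

theorem norm_stepToward_sub_le (hε : 0 < ε) (x y : E) : ‖stepToward ε x y - x‖ ≤ ε := by
  have hmax : 0 < max ε ‖y - x‖ := lt_max_of_lt_left hε
  rw [stepToward, add_sub_cancel_left, norm_smul, Real.norm_of_nonneg (by positivity),
    div_mul_eq_mul_div, div_le_iff₀ hmax]
  exact mul_le_mul_of_nonneg_left (le_max_right _ _) hε.le

theorem Continuous.stepToward (hε : 0 < ε) {T : Type*} [TopologicalSpace T] {f g : T → E}
    (hf : Continuous f) (hg : Continuous g) :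
    Continuous fun t => stepToward ε (f t) (g t) :=
  hf.add (((continuous_const.div (continuous_const.max (hg.sub hf).norm))
    fun _ => (lt_max_of_lt_left hε).ne').smul (hg.sub hf))

/-- The step is either the midpoint of `x` and the point of `[x, y]` at distance `2ε` from `x`,
or it lies between `y` and the midpoint of `x` and `y`. -/
theorem norm_stepToward_le {s s' : ℝ} (hε : 0 < ε) (hs' : s' ≤ s)
    (huc : ∀ x y : E, ‖x‖ ≤ s → ‖y‖ ≤ s → ε ≤ ‖x - y‖ → ‖x + y‖ ≤ 2 * s')
    {x y : E} (hx : ‖x‖ ≤ s) (hy : ‖y‖ ≤ s') : ‖stepToward ε x y‖ ≤ s' := by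
  set d := ‖y - x‖
  rcases le_or_gt d ε with hd | hd
  · rwa [stepToward, max_eq_left hd, div_self hε.ne', one_smul, add_sub_cancel]
  have hd_pos : 0 < d := hε.trans hd
  have hstep : stepToward ε x y = x + (ε / d) • (y - x) := by
    rw [stepToward, max_eq_right hd.le]
  have half_norm : ∀ z : E, ‖x + z‖ ≤ 2 * s' → ‖(2⁻¹ : ℝ) • (x + z)‖ ≤ s' := fun z hz => by
    rw [norm_smul, Real.norm_of_nonneg (by norm_num)]; linarith
  rcases le_or_gt (2 * ε) d with h2d | h2d
  · set w := x + (2 * ε / d) • (y - x)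
    have hw : ‖w‖ ≤ s := by
      rw [← mem_closedBall_zero_iff] at hx hy ⊢
      exact (convex_closedBall (0 : E) s).add_smul_sub_mem hx
        (closedBall_subset_closedBall hs' hy) ⟨by positivity, (div_le_one hd_pos).2 h2d⟩
    have hxw : ε ≤ ‖x - w‖ := by
      rw [sub_add_cancel_left, norm_neg, norm_smul, Real.norm_of_nonneg (by positivity),
        div_mul_cancel₀ _ hd_pos.ne']
      linarith
    convert half_norm w (huc x w hx hw hxw) using 2
    rw [hstep]
    module
  · set m := (2⁻¹ : ℝ) • (x + y)
    have hm : ‖m‖ ≤ s' :=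
      half_norm y (huc x y hx (hy.trans hs') (by rw [norm_sub_rev]; exact hd.le))
    have hmem : m + (2 * ε / d - 1) • (y - m) ∈ closedBall (0 : E) s' := by
      refine (convex_closedBall (0 : E) s').add_smul_sub_mem (mem_closedBall_zero_iff.2 hm)
        (mem_closedBall_zero_iff.2 hy) ⟨?_, ?_⟩
      · rw [sub_nonneg, le_div_iff₀ hd_pos]; linarith
      · rw [sub_le_iff_le_add, div_le_iff₀ hd_pos]; linarith
    rw [← mem_closedBall_zero_iff, hstep]
    convert hmem using 1
    module

end StepToward

theorem exists_forall_norm_le_add_le_two_mul_sub (E : Type*) [NormedAddCommGroup E]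
    [NormedSpace ℝ E] [UniformConvexSpace E] {ε : ℝ} (hε : 0 < ε) (R : ℝ) :
    ∃ η > 0, ∀ s ≤ R, ∀ x y : E, ‖x‖ ≤ s → ‖y‖ ≤ s → ε ≤ ‖x - y‖ → ‖x + y‖ ≤ 2 * s - η := by
  -- Radii below `ε / 2` are vacuous, so the gap of the unit ball scales to `ε / 2 * δ`.
  have hR : 0 < max R ε := lt_max_of_lt_right hε
  obtain ⟨δ, hδ, huc⟩ := exists_forall_closed_ball_dist_add_le_two_sub E (div_pos hε hR)
  refine ⟨ε / 2 * δ, by positivity, fun s hsR x y hx hy hxy => ?_⟩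
  have hεs : ε ≤ 2 * s := hxy.trans ((norm_sub_le x y).trans (by linarith))
  have hs : 0 < s := by linarith
  have hs_inv : 0 ≤ s⁻¹ := inv_nonneg.2 hs.le
  have unit : ∀ z : E, ‖z‖ ≤ s → ‖s⁻¹ • z‖ ≤ 1 := fun z hz => by
    rw [norm_smul_of_nonneg hs_inv, inv_mul_le_one₀ hs]; exact hz
  have hsep : ε / max R ε ≤ ‖s⁻¹ • x - s⁻¹ • y‖ := by
    rw [← smul_sub, norm_smul_of_nonneg hs_inv, ← div_eq_inv_mul]
    exact div_le_div₀ (norm_nonneg _) hxy hs (hsR.trans (le_max_left R ε))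
  have key := huc (unit x hx) (unit y hy) hsep
  rw [← smul_add, norm_smul_of_nonneg hs_inv, inv_mul_le_iff₀ hs] at key
  nlinarith

namespace BoundedContinuousFunction

variable {T X : Type*} [TopologicalSpace T] [NormedAddCommGroup X]

theorem norm_apply_sub_le_farr {B : Set (T →ᵇ X)} (hB : IsBounded B) (f : T →ᵇ X) {b : T →ᵇ X}
    (hb : b ∈ B) (t : T) : ‖f t - b t‖ ≤ farr f B :=
  ((f - b).norm_coe_le_norm t).trans (norm_sub_le_farr_s10 hB f hb)

variable [NormedSpace ℝ X]

theorem exists_apply_eq_stepToward {ε : ℝ} (hε : 0 < ε) (f g : T →ᵇ X) :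
    ∃ h : T →ᵇ X, ∀ t, h t = stepToward ε (f t) (g t) :=
  ⟨.ofNormedAddCommGroup _ (f.continuous.stepToward hε g.continuous) (max ‖f‖ ‖g‖) fun t =>
    (norm_stepToward_le_max hε _ _).trans
      (max_le_max (f.norm_coe_le_norm t) (g.norm_coe_le_norm t)), fun _ => rfl⟩

theorem exists_dist_le_farr_le_rad_add [UniformConvexSpace X] {ρ : ℝ} {B : Set (T →ᵇ X)}
    (hB_ne : B.Nonempty) (hB : IsBounded B) {ε : ℝ} (hε : 0 < ε) :
    ∃ δ > 0, ∀ δ' > 0, ∀ f ∈ closedBall (0 : T →ᵇ X) ρ,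
      farr f B ≤ rad (closedBall 0 ρ) B + δ →
      ∃ h ∈ closedBall (0 : T →ᵇ X) ρ, farr h B ≤ rad (closedBall 0 ρ) B + δ' ∧ dist f h ≤ ε := by
  set r := rad (closedBall (0 : T →ᵇ X) ρ) B
  obtain ⟨η, hη, huc⟩ := exists_forall_norm_le_add_le_two_mul_sub X hε (r + 1)
  refine ⟨min 1 (η / 2), by positivity, fun δ' hδ' f hf hfB => ?_⟩
  set δ := min 1 (η / 2)
  obtain ⟨g, hg, hgB⟩ := exists_farr_le_rad_add ⟨f, hf⟩ (by positivity : 0 < min δ δ')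
  obtain ⟨h, hh⟩ := exists_apply_eq_stepToward hε f g
  have hρ : 0 ≤ ρ := (norm_nonneg f).trans (mem_closedBall_zero_iff.1 hf)
  have huc' : ∀ x y : X, ‖x‖ ≤ r + δ → ‖y‖ ≤ r + δ → ε ≤ ‖x - y‖ →
      ‖x + y‖ ≤ 2 * (r + min δ δ') := fun x y hx hy hxy => by
    have := huc (r + δ) (by gcongr; exact min_le_left _ _) x y hx hy hxy
    have : δ ≤ η / 2 := min_le_right _ _
    have : 0 < min δ δ' := by positivity
    linarith
  refine ⟨h, ?_, farr_le_s10 hB_ne fun b hb => ?_, ?_⟩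
  · refine mem_closedBall_zero_iff.2 ((norm_le hρ).2 fun t => ?_)
    rw [mem_closedBall_zero_iff] at hf hg
    exact (hh t ▸ norm_stepToward_le_max hε _ _).trans
      (max_le ((f.norm_coe_le_norm t).trans hf) ((g.norm_coe_le_norm t).trans hg))
  · have hs' : 0 ≤ r + min δ δ' := (farr_nonneg_s10 hB_ne hB g).trans hgB
    refine ((norm_le hs').2 fun t => ?_).trans (by gcongr; exact min_le_right _ _)
    rw [coe_sub, Pi.sub_apply, hh, stepToward_sub]
    exact norm_stepToward_le hε (by gcongr; exact min_le_left _ _) huc'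
      ((norm_apply_sub_le_farr hB f hb t).trans hfB) ((norm_apply_sub_le_farr hB g hb t).trans hgB)
  · refine (dist_le hε.le).2 fun t => ?_
    rw [hh, dist_comm, dist_eq_norm]
    exact norm_stepToward_sub_le hε _ _

end BoundedContinuousFunction

theorem stmt10 {T : Type*} [TopologicalSpace T]
    {X : Type*} [NormedAddCommGroup X] [NormedSpace ℝ X] [UniformConvexSpace X]
    [CompleteSpace X] :
    (∀ B : Set (BoundedContinuousFunction T X), B.Nonempty → IsClosed B → IsBounded B →
      (cheb (closedBall (0 : BoundedContinuousFunction T X) 1) B).Nonempty) ∧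
    propP1 (closedBall (0 : BoundedContinuousFunction T X) 1) := by
  have hP1 : propP1 (closedBall (0 : BoundedContinuousFunction T X) 1) :=
    propP1_of_forall_exists_dist_le isClosed_closedBall ⟨0, mem_closedBall_self zero_le_one⟩
      fun _ hB_ne hB _ hε => BoundedContinuousFunction.exists_dist_le_farr_le_rad_add hB_ne hB hε
  exact ⟨fun B hB_ne hB_closed hB => (hP1 B hB_ne hB_closed hB).1, hP1⟩
end
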